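/- Fix K ≥ 1 and let φ_K, φ̲_K : H → {0,1}^ℤ be as follows: φ_K(h)(n) = 1 iff (h + Δ(n))_b ≠ 0 for all b ∈ 𝓑_K := {b ∈ 𝓑 : b ≤ K}, and φ̲_K(h)(n) = φ̲(h)(n) if n ∈ Per(φ̲(h), lcm(𝓑*_K)) and 0 otherwise, with 𝓑*_K = {b* ∈ 𝓑* : b* ≤ K}. Then the set [φ̲_K, φ_K] := {x ∈ {0,1}^ℤ : φ̲_K(h) ≤ x ≤ φ_K(h) coordinatewise for some h ∈ H} is a subshift, i.e., it is closed in {0,1}^ℤ and invariant under the left shift σ. -/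

import Mathlib

open MeasureTheory Filter Topology
open scoped Classical

noncomputable section
namespace BFree


def cnt (A : Set ℤ) (L : ℕ) : ℝ := ∑ n ∈ Finset.Icc (1:ℤ) (L:ℤ), if n ∈ A then (1:ℝ) else 0

def natDensity (A : Set ℤ) (d : ℝ) : Prop := Tendsto (fun L : ℕ => cnt A L / L) atTop (𝓝 d)

def upperDensity (A : Set ℤ) : ℝ := atTop.limsup fun L : ℕ => cnt A L / L

def lowerDensity (A : Set ℤ) : ℝ := atTop.liminf fun L : ℕ => cnt A L / L

def logDensity (A : Set ℤ) (d : ℝ) : Prop :=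
  Tendsto (fun L : ℕ =>
      (∑ n ∈ Finset.Icc (1:ℤ) (L:ℤ), if n ∈ A then (n:ℝ)⁻¹ else 0) / Real.log L)
    atTop (𝓝 d)

def MB (B : Set ℕ) : Set ℤ := {n : ℤ | ∃ b ∈ B, (b:ℤ) ∣ n}

def FB (B : Set ℕ) : Set ℤ := {n : ℤ | n ∉ MB B}

def eta (B : Set ℕ) : ℤ → Bool := fun n => if n ∈ FB B then true else false

def shift (x : ℤ → Bool) : ℤ → Bool := fun n => x (n + 1)

def shiftn (k : ℕ) (x : ℤ → Bool) : ℤ → Bool := fun n => x (n + (k:ℤ))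

def orbitClosure (x : ℤ → Bool) : Set (ℤ → Bool) :=
  closure {y | ∃ m : ℤ, y = fun n => x (n + m)}

def Xeta (B : Set ℕ) : Set (ℤ → Bool) := orbitClosure (eta B)

def InvM (X : Set (ℤ → Bool)) : Set (Measure (ℤ → Bool)) :=
  {μ | IsProbabilityMeasure μ ∧ μ.map shift = μ ∧ μ X = 1}

def primPart (S : Set ℕ) : Set ℕ := {b ∈ S | ∀ b' ∈ S, b' ∣ b → b' = b}

def Dset (B : Set ℕ) : Set ℕ :=
  {d | ∃ A : Set ℕ, A.Infinite ∧ (∀ a ∈ A, 0 < a) ∧ A.Pairwise Nat.Coprime ∧ ∀ a ∈ A, d * a ∈ B}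

def Bstar (B : Set ℕ) : Set ℕ := primPart (B ∪ Dset B)

def etaStar (B : Set ℕ) : ℤ → Bool := eta (Bstar B)

def Behrend (A : Set ℕ) : Prop := (∀ a ∈ A, 0 < a) ∧ logDensity (MB A) 1

def Cset (B : Set ℕ) : Set ℕ := {c | ∃ A : Set ℕ, Behrend A ∧ ∀ a ∈ A, c * a ∈ B}

def Bprime (B : Set ℕ) : Set ℕ := primPart (B ∪ Cset B)

def etaPrime (B : Set ℕ) : ℤ → Bool := eta (Bprime B)

def Taut (B : Set ℕ) : Prop :=
  ∀ b ∈ B, ∃ d1 d2 : ℝ, logDensity (MB (B \ {b})) d1 ∧ logDensity (MB B) d2 ∧ d1 < d2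

def Per (x : ℤ → Bool) (s : ℕ) : Set ℤ := {i | ∀ k : ℤ, x (i + (s:ℤ) * k) = x i}

def IsToeplitz (x : ℤ → Bool) : Prop := ∀ i : ℤ, ∃ s : ℕ, 0 < s ∧ i ∈ Per x s

def RegularToeplitz (x : ℤ → Bool) : Prop :=
  IsToeplitz x ∧ ∃ δ : ℕ → ℝ,
    (∀ r : ℕ, natDensity (⋃ s ∈ Finset.Icc 1 r, Per x s) (δ r)) ∧ Tendsto δ atTop (𝓝 1)

def QuasiGeneric (ℓ : ℕ → ℕ) (x : ℤ → Bool) (ν : Measure (ℤ → Bool)) : Prop :=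
  ∀ f : C((ℤ → Bool), ℝ),
    Tendsto (fun i => (∑ n ∈ Finset.Icc 1 (ℓ i), f (shiftn n x)) / (ℓ i : ℝ)) atTop
      (𝓝 (∫ y, f y ∂ν))

def RealizesLowerDensity (A : Set ℤ) (ℓ : ℕ → ℕ) : Prop :=
  Tendsto ℓ atTop atTop ∧ Tendsto (fun i => cnt A (ℓ i) / (ℓ i : ℝ)) atTop (𝓝 (lowerDensity A))

def IsMirsky (B : Set ℕ) (ν : Measure (ℤ → Bool)) : Prop :=
  IsProbabilityMeasure ν ∧ ∀ ℓ : ℕ → ℕ, RealizesLowerDensity (MB B) ℓ → QuasiGeneric ℓ (eta B) ν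

def blocks (X : Set (ℤ → Bool)) (n : ℕ) : Set (Fin n → Bool) :=
  {w | ∃ x ∈ X, ∃ m : ℤ, ∀ i : Fin n, x (m + (i:ℤ)) = w i}

def pCount (X : Set (ℤ → Bool)) (n : ℕ) : ℕ := (blocks X n).ncard

def topEnt (X : Set (ℤ → Bool)) : ℝ :=
  atTop.limsup fun n : ℕ => Real.logb 2 (pCount X n) / n

def cylinder {n : ℕ} (w : Fin n → Bool) : Set (ℤ → Bool) := {x | ∀ i : Fin n, x ((i:ℕ):ℤ) = w i}

def blockEntropy (μ : Measure (ℤ → Bool)) (n : ℕ) : ℝ :=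
  -∑ w : Fin n → Bool, ((μ (cylinder w)).toReal * Real.logb 2 (μ (cylinder w)).toReal)

def measEnt (μ : Measure (ℤ → Bool)) : ℝ := atTop.liminf fun n : ℕ => blockEntropy μ n / n


instance (n : ℕ) : TopologicalSpace (ZMod n) := ⊥
instance (n : ℕ) : DiscreteTopology (ZMod n) := ⟨rfl⟩
instance (n : ℕ) : IsTopologicalAddGroup (ZMod n) :=
  { continuous_add := continuous_of_discreteTopology
    continuous_neg := continuous_of_discreteTopology }

abbrev Gr (B : Set ℕ) := ∀ b : B, ZMod (b : ℕ)

def Delta (B : Set ℕ) : ℤ →+ Gr B where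
  toFun n := fun b => (n : ZMod (b:ℕ))
  map_zero' := by funext b; simp
  map_add' m n := by funext b; simp [Pi.add_apply]

def Hsub (B : Set ℕ) : AddSubgroup (Gr B) := (Delta B).range.topologicalClosure

abbrev Hgp (B : Set ℕ) := ↥(Hsub B)

instance (B : Set ℕ) : MeasurableSpace (Hgp B) := borel _
instance (B : Set ℕ) : BorelSpace (Hgp B) := ⟨rfl⟩

def DeltaH (B : Set ℕ) (n : ℤ) : Hgp B :=
  ⟨Delta B n, (Delta B).range.le_topologicalClosure (AddMonoidHom.mem_range.mpr ⟨n, rfl⟩)⟩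

def W (B : Set ℕ) : Set (Hgp B) := {h | ∀ b : B, (h : Gr B) b ≠ 0}

def Wu (B : Set ℕ) : Set (Hgp B) := closure (interior (W B))

def phi (B : Set ℕ) (h : Hgp B) : ℤ → Bool :=
  fun n => if h + DeltaH B n ∈ W B then true else false

def phiu (B : Set ℕ) (h : Hgp B) : ℤ → Bool :=
  fun n => if h + DeltaH B n ∈ Wu B then true else false

def Xphi (B : Set ℕ) : Set (ℤ → Bool) := closure (Set.range (phi B))

def IsHaar (B : Set ℕ) (m : Measure (Hgp B)) : Prop :=
  IsProbabilityMeasure m ∧ ∀ g : Hgp B, m.map (fun h => g + h) = m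

def triangle (B : Set ℕ) (mH : Measure (Hgp B)) : Measure ((ℤ → Bool) × (ℤ → Bool)) :=
  mH.map fun h => (phiu B h, phi B h)

/-- `𝓑_K = {b ∈ 𝓑 : b ≤ K}` as a finset. -/
def BKfin (B : Set ℕ) (K : ℕ) : Finset ℕ := (Finset.Icc 1 K).filter (· ∈ B)

/-- `lcm(𝓑*_K)` where `𝓑*_K = {b* ∈ 𝓑* : b* ≤ K}`. -/
def lcmBstarK (B : Set ℕ) (K : ℕ) : ℕ := (BKfin (Bstar B) K).lcm id

/-- `φ_K(h)(n) = 1` iff `(h + Δ(n))_b ≠ 0` for all `b ∈ 𝓑_K`. -/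
def phiK (B : Set ℕ) (K : ℕ) (h : Hgp B) : ℤ → Bool :=
  fun n =>
    if ∀ (b : ℕ) (hb : b ∈ B), b ≤ K → ((h + DeltaH B n : Hgp B) : Gr B) ⟨b, hb⟩ ≠ 0 then
      true
    else false

/-- `φ̲_K(h)(n) = φ̲(h)(n)` if `n ∈ Per(φ̲(h), lcm(𝓑*_K))`, and `0` otherwise. -/
def phiuK (B : Set ℕ) (K : ℕ) (h : Hgp B) : ℤ → Bool :=
  fun n => if n ∈ Per (phiu B h) (lcmBstarK B K) then phiu B h n else false
section Statement13Aux

variable (B : Set ℕ)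

private lemma ite_tf {p : Prop} [Decidable p] : (if p then true else false) = true ↔ p := by
  by_cases h : p <;> simp [h]

lemma deltaH_add (m n : ℤ) : DeltaH B (m + n) = DeltaH B m + DeltaH B n :=
  Subtype.ext ((Delta B).map_add m n)

lemma deltaH_smul (s k : ℤ) : k • DeltaH B s = DeltaH B (s * k) := by
  apply Subtype.ext
  have h1 : ((k • DeltaH B s : Hgp B) : Gr B) = k • ((DeltaH B s : Hgp B) : Gr B) := rfl
  rw [h1]
  show k • Delta B s = Delta B (s * k)
  rw [← map_zsmul (Delta B) k s]
  congr 1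
  rw [zsmul_eq_mul, Int.cast_id, mul_comm]

lemma phiu_eq_true_iff (h : Hgp B) (m : ℤ) :
    phiu B h m = true ↔ h + DeltaH B m ∈ Wu B := by
  simp [phiu, ite_tf]


lemma phiuK_eq_true_iff (K : ℕ) (h : Hgp B) (n : ℤ) :
    phiuK B K h n = true ↔
      ∀ k : ℤ, h + DeltaH B (n + (lcmBstarK B K : ℤ) * k) ∈ Wu B := by
  constructor
  · intro ht
    by_cases hP : n ∈ Per (phiu B h) (lcmBstarK B K)
    · have hv : phiu B h n = true := by rwa [phiuK, if_pos hP] at ht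
      intro k
      have := hP k
      rw [← phiu_eq_true_iff]
      rw [this, hv]
    · rw [phiuK, if_neg hP] at ht; exact absurd ht (by simp)
  · intro hall
    have h0 : phiu B h n = true := by
      rw [phiu_eq_true_iff]
      simpa using hall 0
    have hP : n ∈ Per (phiu B h) (lcmBstarK B K) := by
      intro k
      rw [h0, phiu_eq_true_iff]
      exact hall k
    rw [phiuK, if_pos hP, h0]

/-- the closed subgroup generated by `Δ(s)`. -/
def HsSub (s : ℕ) : AddSubgroup (Hgp B) :=
  (AddSubgroup.zmultiples (DeltaH B (s : ℤ))).topologicalClosure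

lemma isClosed_HsSub (s : ℕ) : IsClosed ((HsSub B s : Set (Hgp B))) :=
  AddSubgroup.isClosed_topologicalClosure _

lemma deltaH_mul_mem (s : ℕ) (k : ℤ) : DeltaH B ((s : ℤ) * k) ∈ HsSub B s :=
  AddSubgroup.le_topologicalClosure _ ⟨k, deltaH_smul B (s : ℤ) k⟩

lemma denseRange_deltaH : DenseRange (DeltaH B) := by
  intro x
  rw [closure_subtype]
  have himg : Subtype.val '' Set.range (DeltaH B) = Set.range (Delta B) := by
    ext g
    constructor
    · rintro ⟨y, ⟨m, rfl⟩, rfl⟩; exact ⟨m, rfl⟩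
    · rintro ⟨m, rfl⟩; exact ⟨DeltaH B m, ⟨m, rfl⟩, rfl⟩
  rw [himg]
  have hx : (x : Gr B) ∈ ((Delta B).range).topologicalClosure := x.2
  have hx2 : (x : Gr B) ∈ closure (((Delta B).range : AddSubgroup (Gr B)) : Set (Gr B)) := by
    rw [← AddSubgroup.topologicalClosure_coe]; exact hx
  simpa [AddMonoidHom.coe_range] using hx2


lemma compactSpace_Hgp (hB : 0 ∉ B) : CompactSpace (Hgp B) := by
  haveI : ∀ b : B, CompactSpace (ZMod (b : ℕ)) := fun b => by
    haveI : NeZero (b : ℕ) := ⟨fun h => hB (h ▸ b.2)⟩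
    haveI : Finite (ZMod (b : ℕ)) := inferInstance
    exact Finite.compactSpace
  haveI : CompactSpace (Gr B) := inferInstance
  exact isCompact_iff_compactSpace.mp (AddSubgroup.isClosed_topologicalClosure _).isCompact

lemma lcmBstarK_ne_zero (K : ℕ) : lcmBstarK B K ≠ 0 := by
  unfold lcmBstarK
  rw [Ne, Finset.lcm_eq_zero_iff]
  rintro ⟨b, hb, hb0⟩
  have := Finset.mem_filter.mp hb
  have := Finset.mem_Icc.mp this.1
  simp only [id] at hb0
  omega

lemma isOpen_HsSub (hB : 0 ∉ B) {s : ℕ} (hs : s ≠ 0) :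
    IsOpen ((HsSub B s : Set (Hgp B))) := by
  haveI := compactSpace_Hgp B hB
  set C : ℕ → Set (Hgp B) := fun j => (fun g => g - DeltaH B (j : ℤ)) ⁻¹' (HsSub B s) with hC
  have hCclosed : ∀ j, IsClosed (C j) := fun j =>
    (isClosed_HsSub B s).preimage (continuous_id.sub continuous_const)
  have hcover : ∀ g : Hgp B, ∃ j ∈ Finset.range s, g ∈ C j := by
    intro g
    have hclosed : IsClosed (⋃ j ∈ Finset.range s, C j) :=
      Set.Finite.isClosed_biUnion (Finset.range s).finite_toSet fun j _ => hCclosed j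
    have hsub : Set.range (DeltaH B) ⊆ ⋃ j ∈ Finset.range s, C j := by
      rintro _ ⟨m, rfl⟩
      have hspos : (0 : ℤ) < (s : ℤ) := by exact_mod_cast Nat.pos_of_ne_zero hs
      refine Set.mem_iUnion₂.mpr ⟨(m % (s : ℤ)).toNat, ?_, ?_⟩
      · rw [Finset.mem_range]
        have h1 : m % (s : ℤ) < (s : ℤ) := Int.emod_lt_of_pos m hspos
        have h0 : (0 : ℤ) ≤ m % (s : ℤ) := Int.emod_nonneg m (by omega)
        omega
      · show DeltaH B m - DeltaH B ((m % (s : ℤ)).toNat : ℤ) ∈ HsSub B s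
        have h0 : (0 : ℤ) ≤ m % (s : ℤ) := Int.emod_nonneg m (by omega)
        have h2 : (((m % (s : ℤ)).toNat : ℤ)) = m % (s : ℤ) := Int.toNat_of_nonneg h0
        have h3 : DeltaH B m - DeltaH B ((m % (s : ℤ)).toNat : ℤ)
            = DeltaH B ((s : ℤ) * (m / (s : ℤ))) := by
          rw [h2]
          have : m - m % (s : ℤ) = (s : ℤ) * (m / (s : ℤ)) := by
            have := Int.mul_ediv_add_emod m (s : ℤ)
            omega
          rw [← this, sub_eq_iff_eq_add, ← deltaH_add]
          congr 1; omega
        rw [h3]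
        exact deltaH_mul_mem B s _
    have huniv : (Set.univ : Set (Hgp B)) ⊆ ⋃ j ∈ Finset.range s, C j := by
      have hd := denseRange_deltaH B
      calc (Set.univ : Set (Hgp B)) = closure (Set.range (DeltaH B)) := (hd.closure_range).symm
        _ ⊆ ⋃ j ∈ Finset.range s, C j := hclosed.closure_subset_iff.mpr hsub
    obtain ⟨j, hj, hgj⟩ := Set.mem_iUnion₂.mp (huniv (Set.mem_univ g))
    exact ⟨j, hj, hgj⟩
  rw [← isClosed_compl_iff]
  have hcompl : ((HsSub B s : Set (Hgp B)))ᶜ =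
      ⋃ j ∈ (Finset.range s).filter (fun j : ℕ => DeltaH B (j : ℤ) ∉ HsSub B s), C j := by
    ext g
    simp only [Set.mem_compl_iff, SetLike.mem_coe]
    constructor
    · intro hg
      obtain ⟨j, hj, hgj⟩ := hcover g
      have hd : DeltaH B (j : ℤ) ∉ HsSub B s := by
        intro hd
        apply hg
        have h1 : g - DeltaH B (j : ℤ) ∈ HsSub B s := hgj
        have h2 := (HsSub B s).add_mem h1 hd
        simpa using h2
      exact Set.mem_iUnion₂.mpr ⟨j, Finset.mem_filter.mpr ⟨hj, hd⟩, hgj⟩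
    · intro hg hmem
      obtain ⟨j, hj, hgj⟩ := Set.mem_iUnion₂.mp hg
      have hd := (Finset.mem_filter.mp hj).2
      have h1 : g - DeltaH B (j : ℤ) ∈ HsSub B s := hgj
      exact hd (by simpa using (HsSub B s).sub_mem hmem h1)
  rw [hcompl]
  exact Set.Finite.isClosed_biUnion (Finset.finite_toSet _) fun j _ => hCclosed j


lemma isOpen_phiuK_set (hB : 0 ∉ B) (K : ℕ) (n : ℤ) :
    IsOpen {h : Hgp B | phiuK B K h n = true} := by
  set s := lcmBstarK B K with hsdef
  have hs : s ≠ 0 := lcmBstarK_ne_zero B K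
  have hWu : IsClosed (Wu B) := isClosed_closure
  rw [isOpen_iff_forall_mem_open]
  intro h hh
  rw [Set.mem_setOf_eq, phiuK_eq_true_iff] at hh
  have key : ∀ t ∈ HsSub B s, h + DeltaH B n + t ∈ Wu B := by
    have hTclosed : IsClosed {t : Hgp B | h + DeltaH B n + t ∈ Wu B} :=
      hWu.preimage (continuous_const.add continuous_id)
    have hTsub : (AddSubgroup.zmultiples (DeltaH B (s : ℤ)) : Set (Hgp B)) ⊆
        {t : Hgp B | h + DeltaH B n + t ∈ Wu B} := by
      rintro t ⟨k, rfl⟩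
      show h + DeltaH B n + k • DeltaH B (s : ℤ) ∈ Wu B
      rw [deltaH_smul, add_assoc, ← deltaH_add]
      exact hh k
    intro t ht
    have ht2 : t ∈ closure (AddSubgroup.zmultiples (DeltaH B (s : ℤ)) : Set (Hgp B)) := by
      rw [← AddSubgroup.topologicalClosure_coe]; exact ht
    exact (hTclosed.closure_subset_iff.mpr hTsub) ht2
  refine ⟨(fun g => g - h) ⁻¹' (HsSub B s : Set (Hgp B)), ?_, ?_, ?_⟩
  · intro g hg
    have hg' : g - h ∈ HsSub B s := hg
    rw [Set.mem_setOf_eq, phiuK_eq_true_iff]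
    intro k
    have hmem : (g - h) + DeltaH B ((s : ℤ) * k) ∈ HsSub B s :=
      (HsSub B s).add_mem hg' (deltaH_mul_mem B s k)
    have hW := key _ hmem
    have heq : h + DeltaH B n + ((g - h) + DeltaH B ((s : ℤ) * k)) =
        g + DeltaH B (n + (s : ℤ) * k) := by
      rw [deltaH_add]; abel
    rwa [heq] at hW
  · exact (isOpen_HsSub B hB hs).preimage (continuous_id.sub continuous_const)
  · show h - h ∈ (HsSub B s : Set (Hgp B))
    rw [sub_self]
    exact (HsSub B s).zero_mem

lemma isClosed_phiK_set (K : ℕ) (n : ℤ) :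
    IsClosed {h : Hgp B | phiK B K h n = true} := by
  have hset : {h : Hgp B | phiK B K h n = true} =
      ⋂ (b : ℕ), ⋂ (hb : b ∈ B), ⋂ (_ : b ≤ K),
        {h : Hgp B | ((h + DeltaH B n : Hgp B) : Gr B) ⟨b, hb⟩ ≠ 0} := by
    ext h
    simp only [Set.mem_setOf_eq, Set.mem_iInter, phiK, ite_tf]
  rw [hset]
  refine isClosed_iInter fun b => isClosed_iInter fun hb => isClosed_iInter fun _ => ?_
  have hc : Continuous fun h : Hgp B => ((h + DeltaH B n : Hgp B) : Gr B) ⟨b, hb⟩ :=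
    (continuous_apply _).comp (continuous_subtype_val.comp (continuous_id.add continuous_const))
  exact IsClosed.preimage hc (isClosed_discrete {y : ZMod b | y ≠ 0})

lemma phiK_shift (K : ℕ) (h : Hgp B) (m n : ℤ) :
    phiK B K (h + DeltaH B m) n = phiK B K h (n + m) := by
  have heq : h + DeltaH B m + DeltaH B n = h + DeltaH B (n + m) := by
    rw [deltaH_add]; abel
  simp only [phiK, heq]

lemma phiu_shift (h : Hgp B) (m n : ℤ) :
    phiu B (h + DeltaH B m) n = phiu B h (n + m) := by
  have heq : h + DeltaH B m + DeltaH B n = h + DeltaH B (n + m) := by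
    rw [deltaH_add]; abel
  simp only [phiu, heq]

lemma per_shift (h : Hgp B) (m : ℤ) (s : ℕ) (n : ℤ) :
    n ∈ Per (phiu B (h + DeltaH B m)) s ↔ n + m ∈ Per (phiu B h) s := by
  unfold Per
  simp only [Set.mem_setOf_eq, phiu_shift]
  constructor
  · intro hk k
    have h1 := hk k
    rwa [show n + (s : ℤ) * k + m = n + m + (s : ℤ) * k from by ring] at h1
  · intro hk k
    have h1 := hk k
    rwa [show n + m + (s : ℤ) * k = n + (s : ℤ) * k + m from by ring] at h1

lemma phiuK_shift (K : ℕ) (h : Hgp B) (m n : ℤ) :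
    phiuK B K (h + DeltaH B m) n = phiuK B K h (n + m) := by
  unfold phiuK
  by_cases hP : n + m ∈ Per (phiu B h) (lcmBstarK B K)
  · rw [if_pos ((per_shift B h m _ n).mpr hP), if_pos hP, phiu_shift]
  · rw [if_neg (fun hc => hP ((per_shift B h m _ n).mp hc)), if_neg hP]

end Statement13Aux
/-- `[φ̲_K, φ_K]` is a subshift: it is closed and `σ`-invariant. -/
theorem statement13 (B : Set ℕ) (hB : 0 ∉ B) (K : ℕ) (hK : 1 ≤ K) :
    IsClosed {x : ℤ → Bool | ∃ h : Hgp B, ∀ n, phiuK B K h n ≤ x n ∧ x n ≤ phiK B K h n} ∧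
    shift '' {x : ℤ → Bool | ∃ h : Hgp B, ∀ n, phiuK B K h n ≤ x n ∧ x n ≤ phiK B K h n} =
      {x : ℤ → Bool | ∃ h : Hgp B, ∀ n, phiuK B K h n ≤ x n ∧ x n ≤ phiK B K h n} := by
  haveI := compactSpace_Hgp B hB
  constructor
  · -- closedness
    have hR : IsClosed {p : Hgp B × (ℤ → Bool) |
        ∀ n, phiuK B K p.1 n ≤ p.2 n ∧ p.2 n ≤ phiK B K p.1 n} := by
      have hset : {p : Hgp B × (ℤ → Bool) |
          ∀ n, phiuK B K p.1 n ≤ p.2 n ∧ p.2 n ≤ phiK B K p.1 n} =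
          ⋂ n : ℤ, ({p : Hgp B × (ℤ → Bool) | phiuK B K p.1 n ≤ p.2 n} ∩
            {p : Hgp B × (ℤ → Bool) | p.2 n ≤ phiK B K p.1 n}) := by
        ext p
        simp only [Set.mem_setOf_eq, Set.mem_iInter, Set.mem_inter_iff, forall_and]
      rw [hset]
      refine isClosed_iInter fun n => IsClosed.inter ?_ ?_
      · have h1 : {p : Hgp B × (ℤ → Bool) | phiuK B K p.1 n ≤ p.2 n} =
            ({p : Hgp B × (ℤ → Bool) | phiuK B K p.1 n = true} ∩
              {p : Hgp B × (ℤ → Bool) | p.2 n = false})ᶜ := by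
          ext p
          cases h1 : phiuK B K p.1 n <;> cases h2 : p.2 n <;>
            simp [Set.mem_setOf_eq, h1, h2]
        rw [h1]
        refine IsOpen.isClosed_compl (IsOpen.inter ?_ ?_)
        · show IsOpen ((fun p : Hgp B × (ℤ → Bool) => p.1) ⁻¹' {h : Hgp B | phiuK B K h n = true})
          exact (isOpen_phiuK_set B hB K n).preimage continuous_fst
        · show IsOpen ((fun p : Hgp B × (ℤ → Bool) => p.2 n) ⁻¹' {y : Bool | y = false})
          exact (isOpen_discrete _).preimage ((continuous_apply n).comp continuous_snd)
      · have h2 : {p : Hgp B × (ℤ → Bool) | p.2 n ≤ phiK B K p.1 n} =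
            ({p : Hgp B × (ℤ → Bool) | p.2 n = true} ∩
              {p : Hgp B × (ℤ → Bool) | phiK B K p.1 n = false})ᶜ := by
          ext p
          cases h1 : phiK B K p.1 n <;> cases h2 : p.2 n <;>
            simp [Set.mem_setOf_eq, h1, h2]
        rw [h2]
        refine IsOpen.isClosed_compl (IsOpen.inter ?_ ?_)
        · show IsOpen ((fun p : Hgp B × (ℤ → Bool) => p.2 n) ⁻¹' {y : Bool | y = true})
          exact (isOpen_discrete _).preimage ((continuous_apply n).comp continuous_snd)
        · have hopen : IsOpen {h : Hgp B | phiK B K h n = false} := by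
            have : {h : Hgp B | phiK B K h n = false} = {h : Hgp B | phiK B K h n = true}ᶜ := by
              ext h
              cases hv : phiK B K h n <;> simp [hv]
            rw [this]
            exact (isClosed_phiK_set B K n).isOpen_compl
          show IsOpen ((fun p : Hgp B × (ℤ → Bool) => p.1) ⁻¹' {h : Hgp B | phiK B K h n = false})
          exact hopen.preimage continuous_fst
    have himg : {x : ℤ → Bool | ∃ h : Hgp B, ∀ n, phiuK B K h n ≤ x n ∧ x n ≤ phiK B K h n} =
        Prod.snd '' {p : Hgp B × (ℤ → Bool) |
          ∀ n, phiuK B K p.1 n ≤ p.2 n ∧ p.2 n ≤ phiK B K p.1 n} := by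
      ext x
      constructor
      · rintro ⟨h, hh⟩
        exact ⟨(h, x), hh, rfl⟩
      · rintro ⟨⟨h, y⟩, hp, rfl⟩
        exact ⟨h, hp⟩
    rw [himg]
    exact isClosedMap_snd_of_compactSpace _ hR
  · -- shift invariance
    ext x
    constructor
    · rintro ⟨y, ⟨h, hy⟩, rfl⟩
      refine ⟨h + DeltaH B 1, fun n => ?_⟩
      rw [phiuK_shift, phiK_shift]
      exact hy (n + 1)
    · rintro ⟨h, hx⟩
      refine ⟨fun n => x (n + (-1)), ⟨h + DeltaH B (-1), fun n => ?_⟩, ?_⟩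
      · rw [phiuK_shift, phiK_shift]
        exact hx (n + (-1))
      · funext n
        show x (n + 1 + (-1)) = x n
        norm_num

end BFree
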